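/- Let G be a finite group with center Z = Z(G), and let T be an abelian subgroup of G with Z ≤ T such that: (i) C_{G/Z}(tZ) ≤ T/Z for every t ∈ T \ Z; (ii) |T/Z| is odd and coprime to |Z|; (iii) writing π for the set of primes dividing |T/Z|, the group G/Z contains no element whose order is divisible both by a prime in π and by a prime not in π; (iv) every element of G/Z whose order is a product of primes in π lies in some conjugate of T/Z. Then for every g ∈ T \ Z, the conjugacy class size |g^G| = |G : T| is an isolated vertex of the divisibility graph D(G); that is, for every non-central x ∈ G with |x^G| ≠ |g^G|, neither of |x^G| and |g^G| divides the other. -/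

import Mathlib

/-!
For `t ∈ T \ Z`, condition (i) and the commutativity of `T` force `C_G(t) = T`, so
`|t^G| = |G : T|`. Now let `x` be non-central with `|x^G| ≠ |G : T|`; then no conjugate of `xZ`
lies in `T/Z`. If a prime `p` divided both `|T/Z|` and `|C_G(x)/Z|`, an element `yZ` of order `p`
in `C_G(x)/Z` would, by (iv), have a conjugate `tZ ∈ T/Z` with `t ∉ Z`, and the same conjugate
of `xZ` would centralize `tZ`, hence lie in `T/Z` by (i). So `|C_G(x)/Z|` and `|T/Z|` are
coprime. As `|x^G| = |G/Z : C_G(x)/Z|` and `|G : T| = |G/Z : T/Z|`, divisibility either way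
would make `C_G(x)/Z` or `T/Z` trivial, whereas both contain non-trivial elements `xZ`, `gZ`.
-/

open Subgroup

theorem card_isConj_eq_index_centralizer {G : Type*} [Group G] (a : G) :
    Nat.card {y : G // IsConj a y} = (centralizer {a}).index := by
  rw [centralizer_eq_comap_stabilizer]
  refine Eq.trans ?_ (index_comap_of_surjective _ ConjAct.toConjAct.surjective).symm
  rw [MulAction.index_stabilizer, ← Nat.card_coe_set_eq]
  exact Nat.card_congr (Equiv.subtypeEquivRight fun y => by
    rw [ConjAct.mem_orbit_conjAct, isConj_comm])

theorem IsConj.card_isConj_eq {G : Type*} [Group G] {a b : G} (h : IsConj a b) :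
    Nat.card {y : G // IsConj a y} = Nat.card {y : G // IsConj b y} :=
  Nat.card_congr (Equiv.subtypeEquivRight fun _ => ⟨h.symm.trans, h.trans⟩)

theorem Subgroup.eq_bot_of_index_dvd_index_of_coprime {G : Type*} [Group G] [Finite G]
    {H K : Subgroup G} (hcop : (Nat.card H).Coprime (Nat.card K)) (hdvd : H.index ∣ K.index) :
    K = ⊥ := by
  obtain ⟨m, hm⟩ := hdvd
  have hcard : Nat.card H = m * Nat.card K := by
    apply Nat.eq_of_mul_eq_mul_left (Nat.pos_of_ne_zero H.index_ne_zero_of_finite)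
    rw [H.index_mul_card, ← K.index_mul_card, hm, mul_assoc]
  exact card_eq_one.mp (hcop.symm.eq_one_of_dvd ⟨m, hcard.trans (mul_comm _ _)⟩)

section SelfCentralizing

variable {Q : Type*} [Group Q] {U : Subgroup Q}

theorem conj_mem_of_commute_of_conj_mem (hU : ∀ u ∈ U, u ≠ 1 → centralizer {u} ≤ U)
    {x y h : Q} (hxy : Commute x y) (hy : y ≠ 1) (hyU : h⁻¹ * y * h ∈ U) :
    h⁻¹ * x * h ∈ U := by
  refine hU _ hyU (by simpa only [inv_inv] using (conj_eq_one_iff (a := h⁻¹)).not.mpr hy)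
    (mem_centralizer_singleton_iff.mpr ?_)
  simpa only [MulAut.conj_apply, inv_inv] using (hxy.map (MulAut.conj h⁻¹)).eq

theorem coprime_card_of_le_centralizer [Finite Q] (hU : ∀ u ∈ U, u ≠ 1 → centralizer {u} ≤ U)
    (hconj : ∀ y : Q, (orderOf y).Prime → orderOf y ∣ Nat.card U → ∃ h, h⁻¹ * y * h ∈ U)
    {x : Q} (hx : ∀ h, h⁻¹ * x * h ∉ U) {C : Subgroup Q} (hC : C ≤ centralizer {x}) :
    (Nat.card C).Coprime (Nat.card U) := by
  refine Nat.coprime_of_dvd fun p hp hpC hpU => ?_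
  have := Fact.mk hp
  obtain ⟨y, hy⟩ := exists_prime_orderOf_dvd_card' p hpC
  rw [← C.orderOf_coe] at hy
  obtain ⟨h, hh⟩ := hconj y (hy ▸ hp) (hy ▸ hpU)
  have hy1 : (y : Q) ≠ 1 := fun h1 => hp.ne_one (by rw [← hy, h1, orderOf_one])
  exact hx h (conj_mem_of_commute_of_conj_mem hU (hC y.2 x rfl) hy1 hh)

end SelfCentralizing

section Quotient

variable {G : Type*} [Group G] {N T : Subgroup G} [N.Normal]

theorem exists_conj_mem_of_conj_mk_mem (hNT : N ≤ T) {x : G} {h : G ⧸ N}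
    (hx : h⁻¹ * (x : G ⧸ N) * h ∈ T.map (QuotientGroup.mk' N)) :
    ∃ c : G, c⁻¹ * x * c ∈ T := by
  obtain ⟨c, rfl⟩ := QuotientGroup.mk_surjective h
  refine ⟨c, ?_⟩
  rw [← comap_map_eq_self (f := QuotientGroup.mk' N) (H := T) (by rwa [QuotientGroup.ker_mk'])]
  simpa only [mem_comap, QuotientGroup.mk'_apply, QuotientGroup.mk_mul, QuotientGroup.mk_inv]
    using hx

theorem centralizer_singleton_eq_of_centralizer_mk_le [IsMulCommutative T] (hNT : N ≤ T)
    {t : G} (ht : t ∈ T) (hC : centralizer {(t : G ⧸ N)} ≤ T.map (QuotientGroup.mk' N)) :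
    centralizer {t} = T := by
  refine le_antisymm (fun c hc => ?_) (fun c hc => ?_)
  · rw [← comap_map_eq_self (f := QuotientGroup.mk' N) (H := T) (by rwa [QuotientGroup.ker_mk'])]
    refine hC (mem_centralizer_singleton_iff.mpr ?_)
    exact congrArg (QuotientGroup.mk (s := N)) (mem_centralizer_singleton_iff.mp hc)
  · exact mem_centralizer_singleton_iff.mpr (le_centralizer T hc t ht).symm

theorem card_isConj_eq_index_of_conj_mk_mem [IsMulCommutative T] (hNT : N ≤ T)
    (hC : ∀ t ∈ T, t ∉ N → centralizer {(t : G ⧸ N)} ≤ T.map (QuotientGroup.mk' N))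
    {x : G} (hxN : x ∉ N) {h : G ⧸ N} (hx : h⁻¹ * (x : G ⧸ N) * h ∈ T.map (QuotientGroup.mk' N)) :
    Nat.card {y : G // IsConj x y} = T.index := by
  obtain ⟨c, hc⟩ := exists_conj_mem_of_conj_mk_mem hNT hx
  have hcN : c⁻¹ * x * c ∉ N := fun hcN => hxN (by
    simpa only [mul_assoc, mul_inv_cancel, mul_one, mul_inv_cancel_left] using
      (inferInstance : N.Normal).conj_mem _ hcN c)
  rw [(isConj_iff.mpr ⟨c⁻¹, by rw [inv_inv]⟩).card_isConj_eq, card_isConj_eq_index_centralizer,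
    centralizer_singleton_eq_of_centralizer_mk_le hNT hc (hC _ hc hcN)]

end Quotient

theorem stmt12_general {G : Type*} [Group G] [Finite G] (T : Subgroup G)
    (hab : IsMulCommutative T)
    (hZT : Subgroup.center G ≤ T)
    (hCC : ∀ t ∈ T, t ∉ Subgroup.center G →
      Subgroup.centralizer {((t : G) : G ⧸ Subgroup.center G)}
        ≤ T.map (QuotientGroup.mk' (Subgroup.center G)))
    (hHall : ∀ x : G ⧸ Subgroup.center G,
      (∀ b : ℕ, b.Prime → b ∣ orderOf x →
        b ∣ Nat.card (T.map (QuotientGroup.mk' (Subgroup.center G)))) →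
      ∃ h : G ⧸ Subgroup.center G,
        h⁻¹ * x * h ∈ T.map (QuotientGroup.mk' (Subgroup.center G))) :
    ∀ g ∈ T, g ∉ Subgroup.center G →
      Nat.card {y : G // IsConj g y} = T.index ∧
      ∀ x : G, x ∉ Subgroup.center G →
        Nat.card {y : G // IsConj x y} ≠ Nat.card {y : G // IsConj g y} →
        ¬ Nat.card {y : G // IsConj x y} ∣ Nat.card {y : G // IsConj g y} ∧
        ¬ Nat.card {y : G // IsConj g y} ∣ Nat.card {y : G // IsConj x y} := by
  set Z := center G
  set mk := QuotientGroup.mk' Z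
  have hker : mk.ker = Z := QuotientGroup.ker_mk' Z
  have hU : ∀ u ∈ T.map mk, u ≠ 1 → centralizer {u} ≤ T.map mk := by
    rintro _ ⟨t, ht, rfl⟩ ht1
    exact hCC t ht fun htZ => ht1 ((QuotientGroup.eq_one_iff t).mpr htZ)
  have hconj : ∀ y : G ⧸ Z, (orderOf y).Prime → orderOf y ∣ Nat.card (T.map mk) →
      ∃ h, h⁻¹ * y * h ∈ T.map mk := fun y hy hyU =>
    hHall y fun b hb hbd => (Nat.prime_dvd_prime_iff_eq hb hy).mp hbd ▸ hyU
  intro g hg hgZ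
  have hgT : Nat.card {y : G // IsConj g y} = T.index := by
    rw [card_isConj_eq_index_centralizer,
      centralizer_singleton_eq_of_centralizer_mk_le hZT hg (hCC g hg hgZ)]
  refine ⟨hgT, fun x hxZ hne => ?_⟩
  have hx : ∀ h : G ⧸ Z, h⁻¹ * (x : G ⧸ Z) * h ∉ T.map mk := fun h hh =>
    hne ((card_isConj_eq_index_of_conj_mk_mem hZT hCC hxZ hh).trans hgT.symm)
  have hcop := coprime_card_of_le_centralizer hU hconj hx (C := (centralizer {x}).map mk)
    ((map_centralizer_le_centralizer_image {x} mk).trans_eq (by rw [Set.image_singleton]; rfl))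
  rw [card_isConj_eq_index_centralizer, hgT,
    ← index_map_eq T (QuotientGroup.mk'_surjective Z) (hker.le.trans hZT),
    ← index_map_eq (centralizer {x}) (QuotientGroup.mk'_surjective Z)
      (hker.le.trans (center_le_centralizer {x}))]
  refine ⟨fun hd => hgZ (hker.le ?_), fun hd => hxZ (hker.le ?_)⟩
  · exact (map_eq_bot_iff T).mp (eq_bot_of_index_dvd_index_of_coprime hcop hd) hg
  · exact (map_eq_bot_iff (centralizer {x})).mp
      (eq_bot_of_index_dvd_index_of_coprime hcop.symm hd) (mem_centralizer_singleton_iff.mpr rfl)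

/-- Let `G` be a finite group with centre `Z`, and `T` an abelian subgroup
with `Z ≤ T` such that: (i) `C_{G/Z}(tZ) ≤ T/Z` for all `t ∈ T \ Z`; (ii) `|T/Z|` is odd and
coprime to `|Z|`; (iii) no element of `G/Z` has order divisible both by a prime dividing
`|T/Z|` and by a prime not dividing `|T/Z|`; (iv) every element of `G/Z` all of whose prime
divisors of its order divide `|T/Z|` lies in a conjugate of `T/Z`. Then for every `g ∈ T \ Z`
the conjugacy class size `|g^G| = |G : T|` is an isolated vertex of the divisibility graph
`D(G)`: for every non-central `x ∈ G` with `|x^G| ≠ |g^G|`, neither of `|x^G|`, `|g^G|`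
divides the other. -/
theorem stmt12 {G : Type*} [Group G] [Finite G] (T : Subgroup G)
    (hab : IsMulCommutative T)
    (hZT : Subgroup.center G ≤ T)
    (hCC : ∀ t ∈ T, t ∉ Subgroup.center G →
      Subgroup.centralizer {((t : G) : G ⧸ Subgroup.center G)}
        ≤ T.map (QuotientGroup.mk' (Subgroup.center G)))
    (hodd : Odd (Nat.card (T.map (QuotientGroup.mk' (Subgroup.center G)))))
    (hcop : Nat.Coprime (Nat.card (T.map (QuotientGroup.mk' (Subgroup.center G))))
      (Nat.card (Subgroup.center G)))
    (hNoMixed : ∀ x : G ⧸ Subgroup.center G, ∀ a b : ℕ, a.Prime → b.Prime →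
      a ∣ Nat.card (T.map (QuotientGroup.mk' (Subgroup.center G))) →
      ¬ b ∣ Nat.card (T.map (QuotientGroup.mk' (Subgroup.center G))) →
      a ∣ orderOf x → ¬ b ∣ orderOf x)
    (hHall : ∀ x : G ⧸ Subgroup.center G,
      (∀ b : ℕ, b.Prime → b ∣ orderOf x →
        b ∣ Nat.card (T.map (QuotientGroup.mk' (Subgroup.center G)))) →
      ∃ h : G ⧸ Subgroup.center G,
        h⁻¹ * x * h ∈ T.map (QuotientGroup.mk' (Subgroup.center G))) :
    ∀ g ∈ T, g ∉ Subgroup.center G →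
      Nat.card {y : G // IsConj g y} = T.index ∧
      ∀ x : G, x ∉ Subgroup.center G →
        Nat.card {y : G // IsConj x y} ≠ Nat.card {y : G // IsConj g y} →
        ¬ Nat.card {y : G // IsConj x y} ∣ Nat.card {y : G // IsConj g y} ∧
        ¬ Nat.card {y : G // IsConj g y} ∣ Nat.card {y : G // IsConj x y} :=
  stmt12_general T hab hZT hCC hHall
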